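/- Let a, b be nonzero complex numbers with |ab| < 1. Then f(a³b, ab³) = (1/2)·[f(a,b) + f(−a,−b)]. -/

import Mathlib

/-!
Write `f(a,b) = ∑ₙ tₙ(a,b)`. Since `n(n+1)/2 + n(n-1)/2 = n²` has the parity of `n`, passing to
`(-a,-b)` multiplies `tₙ` by `(-1)ⁿ`, so `(f(a,b) + f(-a,-b))/2` is the sum of the even-indexed
terms. These are again theta terms: `t₂ₘ(a,b) = tₘ(a³b, ab³)`, because
`2m(2m ± 1)/2 = 3 · m(m ± 1)/2 + m(m ∓ 1)/2`.
-/

open Filter Function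

/-- Ramanujan's theta function `f(a,b) = ∑_{n ∈ ℤ} a^(n(n+1)/2) * b^(n(n-1)/2)`. -/
noncomputable def ramanujanTheta (a b : ℂ) : ℂ :=
  ∑' n : ℤ, a ^ (n * (n + 1) / 2) * b ^ (n * (n - 1) / 2)

namespace Int

theorem two_mul_mul_add_one_div_two (n : ℤ) : 2 * (n * (n + 1) / 2) = n * (n + 1) :=
  two_mul_ediv_two_of_even (even_mul_succ_self n)

theorem two_mul_mul_sub_one_div_two (n : ℤ) : 2 * (n * (n - 1) / 2) = n * (n - 1) :=
  two_mul_ediv_two_of_even (even_mul_pred_self n)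

theorem mul_add_one_div_two_nonneg (n : ℤ) : 0 ≤ n * (n + 1) / 2 := by
  nlinarith [two_mul_mul_add_one_div_two n, sq_nonneg (2 * n + 1)]

theorem mul_sub_one_div_two_nonneg (n : ℤ) : 0 ≤ n * (n - 1) / 2 := by
  nlinarith [two_mul_mul_sub_one_div_two n, sq_nonneg (2 * n - 1)]

theorem natCast_choose_two (k : ℕ) : ((k.choose 2 : ℕ) : ℤ) = k * (k - 1) / 2 := by
  rw [Nat.choose_two_right, Int.natCast_div]
  rcases k with _ | k
  · simp
  · push_cast [Nat.add_sub_cancel]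
    ring_nf

end Int

theorem summable_pow_choose_two_mul_pow {𝕜 : Type*} [NormedField 𝕜] [CompleteSpace 𝕜]
    {x : 𝕜} (hx : ‖x‖ < 1) (c : 𝕜) : Summable fun k : ℕ => x ^ k.choose 2 * c ^ k := by
  have hratio : Tendsto (fun k : ℕ => ‖x‖ ^ k * ‖c‖) atTop (nhds 0) := by
    simpa using (tendsto_pow_atTop_nhds_zero_of_lt_one (norm_nonneg x) hx).mul_const ‖c‖
  refine summable_of_ratio_norm_eventually_le (r := 1 / 2) (by norm_num) ?_
  filter_upwards [hratio.eventually (ge_mem_nhds (by norm_num : (0 : ℝ) < 1 / 2))] with k hk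
  calc ‖x ^ (k + 1).choose 2 * c ^ (k + 1)‖
      = (‖x‖ ^ k * ‖c‖) * ‖x ^ k.choose 2 * c ^ k‖ := by
        simp only [Nat.choose_succ_succ', Nat.choose_one_right, norm_mul, norm_pow, pow_add,
          pow_succ]
        ring
    _ ≤ 1 / 2 * ‖x ^ k.choose 2 * c ^ k‖ := by gcongr

noncomputable def ramanujanThetaTerm (a b : ℂ) (n : ℤ) : ℂ :=
  a ^ (n * (n + 1) / 2) * b ^ (n * (n - 1) / 2)

theorem ramanujanTheta_eq_tsum (a b : ℂ) :
    ramanujanTheta a b = ∑' n, ramanujanThetaTerm a b n := rfl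

theorem ramanujanThetaTerm_neg (a b : ℂ) (n : ℤ) :
    ramanujanThetaTerm a b (-n) = ramanujanThetaTerm b a n := by
  have h1 : -n * (-n + 1) = n * (n - 1) := by ring
  have h2 : -n * (-n - 1) = n * (n + 1) := by ring
  rw [ramanujanThetaTerm, ramanujanThetaTerm, h1, h2, mul_comm]

theorem ramanujanThetaTerm_natCast (a b : ℂ) (k : ℕ) :
    ramanujanThetaTerm a b k = (a * b) ^ k.choose 2 * a ^ k := by
  have h1 : (k : ℤ) * (k + 1) / 2 = ((k + 1).choose 2 : ℕ) := by
    rw [Int.natCast_choose_two]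
    push_cast
    ring_nf
  rw [ramanujanThetaTerm, h1, ← Int.natCast_choose_two, zpow_natCast, zpow_natCast,
    Nat.choose_succ_succ', Nat.choose_one_right, pow_add, mul_pow]
  ring

theorem summable_ramanujanThetaTerm {a b : ℂ} (hab : ‖a * b‖ < 1) :
    Summable (ramanujanThetaTerm a b) := by
  refine Summable.of_nat_of_neg ?_ ?_
  · simpa only [ramanujanThetaTerm_natCast] using summable_pow_choose_two_mul_pow hab a
  · rw [mul_comm] at hab
    simpa only [ramanujanThetaTerm_neg, ramanujanThetaTerm_natCast]
      using summable_pow_choose_two_mul_pow hab b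

theorem ramanujanThetaTerm_neg_neg (a b : ℂ) (n : ℤ) :
    ramanujanThetaTerm (-a) (-b) n = (-1) ^ n * ramanujanThetaTerm a b n := by
  have hexp : n * (n + 1) / 2 = n + n * (n - 1) / 2 := by
    linarith [Int.two_mul_mul_add_one_div_two n, Int.two_mul_mul_sub_one_div_two n]
  have hsq : (-1 : ℂ) ^ (n * (n - 1) / 2) * (-1) ^ (n * (n - 1) / 2) = 1 := by
    rw [← zpow_add₀ (neg_ne_zero.mpr one_ne_zero), ← two_mul, (even_two_mul _).neg_one_zpow]
  rw [ramanujanThetaTerm, ramanujanThetaTerm, neg_eq_neg_one_mul a, neg_eq_neg_one_mul b,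
    mul_zpow, mul_zpow, hexp, zpow_add₀ (neg_ne_zero.mpr one_ne_zero)]
  linear_combination (-1 : ℂ) ^ n * a ^ (n + n * (n - 1) / 2) * b ^ (n * (n - 1) / 2) * hsq

theorem ramanujanThetaTerm_two_mul (a b : ℂ) (m : ℤ) :
    ramanujanThetaTerm a b (2 * m) = ramanujanThetaTerm (a ^ 3 * b) (a * b ^ 3) m := by
  obtain ⟨p, hp⟩ := Int.eq_ofNat_of_zero_le (Int.mul_add_one_div_two_nonneg m)
  obtain ⟨q, hq⟩ := Int.eq_ofNat_of_zero_le (Int.mul_sub_one_div_two_nonneg m)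
  have hp2 := Int.two_mul_mul_add_one_div_two m
  have hq2 := Int.two_mul_mul_sub_one_div_two m
  have h1 : 2 * m * (2 * m + 1) / 2 = ((3 * p + q : ℕ) : ℤ) := by
    push_cast; linarith [Int.two_mul_mul_add_one_div_two (2 * m)]
  have h2 : 2 * m * (2 * m - 1) / 2 = ((p + 3 * q : ℕ) : ℤ) := by
    push_cast; linarith [Int.two_mul_mul_sub_one_div_two (2 * m)]
  simp only [ramanujanThetaTerm, h1, h2, hp, hq, zpow_natCast]
  ring

theorem Summable.tsum_comp_two_mul {𝕜 : Type*} [RCLike 𝕜] {f : ℤ → 𝕜} (hf : Summable f) :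
    ∑' m, f (2 * m) = (1 / 2) * (∑' n, f n + ∑' n, (-1) ^ n * f n) := by
  have halt : Summable fun n : ℤ => (-1 : 𝕜) ^ n * f n :=
    Summable.of_norm (by simpa only [norm_mul, norm_zpow, norm_neg, norm_one, one_zpow, one_mul]
      using hf.norm)
  have hodd : support (fun n : ℤ => f n + (-1) ^ n * f n) ⊆ Set.range (2 * ·) := by
    intro n hn
    rcases Int.even_or_odd n with ⟨k, rfl⟩ | hn_odd
    · exact ⟨k, two_mul k⟩
    · rw [mem_support, hn_odd.neg_one_zpow, neg_one_mul, add_neg_cancel] at hn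
      exact absurd rfl hn
  calc ∑' m, f (2 * m)
      = (1 / 2) * ∑' m, (f (2 * m) + (-1) ^ (2 * m) * f (2 * m)) := by
        simp only [(even_two_mul _).neg_one_zpow, one_mul, ← two_mul, tsum_mul_left]
        ring
    _ = (1 / 2) * (∑' n, f n + ∑' n, (-1) ^ n * f n) := by
        rw [(mul_right_injective₀ two_ne_zero).tsum_eq hodd, hf.tsum_add halt]

theorem theta_even_part_general (a b : ℂ)
    (hab : ‖a * b‖ < 1) :
    ramanujanTheta (a ^ 3 * b) (a * b ^ 3) =
      (1 / 2) * (ramanujanTheta a b + ramanujanTheta (-a) (-b)) := by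
  simp only [ramanujanTheta_eq_tsum, ← ramanujanThetaTerm_two_mul, ramanujanThetaTerm_neg_neg]
  exact (summable_ramanujanThetaTerm hab).tsum_comp_two_mul

theorem theta_even_part (a b : ℂ) (ha : a ≠ 0) (hb : b ≠ 0)
    (hab : ‖a * b‖ < 1) :
    ramanujanTheta (a ^ 3 * b) (a * b ^ 3) =
      (1 / 2) * (ramanujanTheta a b + ramanujanTheta (-a) (-b)) :=
  theta_even_part_general a b hab
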